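/- Let λ₀, …, λ_M be real numbers such that the trigonometric polynomial T(θ) = Σ_{m=0}^{M} λ_m cos(mθ) is nonnegative for all real θ. Then there exist complex numbers p₀, …, p_M such that for all real θ, T(θ) = |Σ_{m=0}^{M} p_m e^{imθ}|² (Fejér–Riesz factorization). -/

import Mathlib

open Complex Real

section FRAux

open Polynomial

lemma FR.eq_of_circle (P Q : Polynomial ℂ)
    (h : ∀ θ : ℝ, P.eval (Complex.exp (θ * I)) = Q.eval (Complex.exp (θ * I))) : P = Q := by
  have hroots : {x : ℂ | (P - Q).IsRoot x}.Infinite := by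
    have hinj : Set.InjOn (fun θ : ℝ => Complex.exp (θ * I)) (Set.Ioo 0 1) := by
      intro a ha b hb hab
      rw [Complex.exp_eq_exp_iff_exists_int] at hab
      obtain ⟨n, hn⟩ := hab
      have hc : (a : ℂ) = (b : ℂ) + n * (2 * Real.pi) := by
        have hI : (I : ℂ) ≠ 0 := I_ne_zero
        apply mul_right_cancel₀ hI
        rw [hn]; push_cast; ring
      have hr : a = b + n * (2 * Real.pi) := by exact_mod_cast hc
      have hn0 : n = 0 := by
        by_contra hne
        have h1 : (1 : ℝ) ≤ |(n : ℝ)| := by exact_mod_cast Int.one_le_abs hne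
        have habs : |a - b| = |(n : ℝ)| * (2 * Real.pi) := by
          rw [hr, add_sub_cancel_left, abs_mul,
            abs_of_pos (by positivity : (0:ℝ) < 2 * Real.pi)]
        have hlt : |a - b| < 1 := by
          rw [abs_sub_lt_iff]; constructor <;> nlinarith [ha.1, ha.2, hb.1, hb.2]
        nlinarith [Real.pi_gt_three]
      simp [hn0] at hr; exact hr
    have hI : ((fun θ : ℝ => Complex.exp (θ * I)) '' (Set.Ioo 0 1)).Infinite :=
      Set.Infinite.image hinj (Set.Ioo_infinite (by norm_num))
    apply hI.mono
    rintro z ⟨θ, hθ, rfl⟩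
    simp [Polynomial.IsRoot, h θ]
  have h0 := Polynomial.eq_zero_of_infinite_isRoot _ hroots
  exact sub_eq_zero.mp h0

lemma FR.coeff_symm (M : ℕ) (P : Polynomial ℂ) (hd : P.natDegree ≤ 2 * M)
    (h : ∀ θ : ℝ, ∃ r : ℝ, P.eval (Complex.exp (θ * I)) = Complex.exp ((M : ℝ) * θ * I) * r) :
    ∀ m : ℕ, m ≤ 2 * M → P.coeff m = (starRingEnd ℂ) (P.coeff (2 * M - m)) := by
  set n := 2 * M with hn
  set R : Polynomial ℂ :=
    ∑ m ∈ Finset.range (n + 1), C ((starRingEnd ℂ) (P.coeff (n - m))) * X ^ m with hR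
  have hdlt : P.natDegree < n + 1 := Nat.lt_succ_of_le hd
  have hPR : P = R := by
    apply FR.eq_of_circle
    intro θ
    obtain ⟨r, hr⟩ := h θ
    set z := Complex.exp (θ * I) with hz
    have hzc : (starRingEnd ℂ) z = Complex.exp ((-θ : ℝ) * I) := by
      rw [hz, ← Complex.exp_conj]
      congr 1
      simp [Complex.ext_iff]
    -- P.eval z = exp(2Mθ I) * conj (P.eval z)
    have hmain : P.eval z = Complex.exp ((n : ℝ) * θ * I) * (starRingEnd ℂ) (P.eval z) := by
      rw [hr, map_mul, ← Complex.exp_conj]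
      have h1 : (starRingEnd ℂ) ((M : ℝ) * θ * I) = -((M : ℝ) * θ * I) := by
        simp [Complex.ext_iff]
      rw [h1, Complex.conj_ofReal, ← mul_assoc, ← Complex.exp_add]
      congr 2
      push_cast [hn]
      ring
    have hev : P.eval z = ∑ m ∈ Finset.range (n + 1), P.coeff m * z ^ m :=
      Polynomial.eval_eq_sum_range' hdlt z
    have hconj : (starRingEnd ℂ) (P.eval z) =
        ∑ m ∈ Finset.range (n + 1), (starRingEnd ℂ) (P.coeff m) * ((starRingEnd ℂ) z) ^ m := by
      rw [hev, map_sum]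
      exact Finset.sum_congr rfl fun m _ => by rw [map_mul, map_pow]
    have hRev : R.eval z = ∑ m ∈ Finset.range (n + 1),
        (starRingEnd ℂ) (P.coeff (n - m)) * z ^ m := by
      rw [hR, Polynomial.eval_finset_sum]
      exact Finset.sum_congr rfl fun m _ => by simp
    rw [hmain, hRev, hconj, Finset.mul_sum]
    rw [← Finset.sum_range_reflect (fun m => (starRingEnd ℂ) (P.coeff (n - m)) * z ^ m) (n + 1)]
    apply Finset.sum_congr rfl
    intro m hm
    rw [Finset.mem_range] at hm
    have hm' : m ≤ n := Nat.lt_succ_iff.mp hm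
    have h2 : n + 1 - 1 - m = n - m := by omega
    have h3 : n - (n - m) = m := by omega
    rw [h2, h3, hzc, hz, ← Complex.exp_nat_mul, ← Complex.exp_nat_mul, mul_left_comm,
      ← Complex.exp_add]
    congr 2
    push_cast [Nat.cast_sub hm']
    ring
  intro m hm
  conv_lhs => rw [hPR]
  rw [hR, Polynomial.finset_sum_coeff]
  rw [Finset.sum_eq_single m]
  · simp
  · intro b _ hb
    simp [Polynomial.coeff_X_pow, hb, Ne.symm hb]
  · intro hmem
    exact absurd (Finset.mem_range.mpr (Nat.lt_succ_of_le hm)) hmem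

lemma FR.reflect_root (M : ℕ) (P : Polynomial ℂ) (hd : P.natDegree ≤ 2 * M)
    (h : ∀ θ : ℝ, ∃ r : ℝ, P.eval (Complex.exp (θ * I)) = Complex.exp ((M : ℝ) * θ * I) * r)
    (w : ℂ) (hw : w ≠ 0) (hroot : P.eval w = 0) : P.eval (((starRingEnd ℂ) w)⁻¹) = 0 := by
  have hsym := FR.coeff_symm M P hd h
  set n := 2 * M with hn
  have hdlt : P.natDegree < n + 1 := Nat.lt_succ_of_le hd
  set v : ℂ := ((starRingEnd ℂ) w)⁻¹ with hv
  have hwc : (starRingEnd ℂ) w ≠ 0 := by simpa using hw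
  have key : ((starRingEnd ℂ) w) ^ n * P.eval v = (starRingEnd ℂ) (P.eval w) := by
    rw [Polynomial.eval_eq_sum_range' hdlt v, Polynomial.eval_eq_sum_range' hdlt w,
      map_sum, Finset.mul_sum]
    rw [← Finset.sum_range_reflect (fun m => ((starRingEnd ℂ) w) ^ n * (P.coeff m * v ^ m)) (n + 1)]
    apply Finset.sum_congr rfl
    intro m hm
    rw [Finset.mem_range] at hm
    have hm' : m ≤ n := Nat.lt_succ_iff.mp hm
    have h2 : n + 1 - 1 - m = n - m := by omega
    rw [h2, map_mul, map_pow, hsym (n - m) (by omega)]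
    have h3 : n - (n - m) = m := by omega
    rw [h3, hv]
    rw [inv_pow, mul_comm (((starRingEnd ℂ) w) ^ n)]
    rw [mul_assoc]
    congr 1
    rw [inv_mul_eq_div, div_eq_iff (pow_ne_zero _ hwc), ← pow_add]
    congr 1
    omega
  rw [hroot, map_zero] at key
  exact (mul_eq_zero.mp key).resolve_left (pow_ne_zero _ hwc)

lemma FR.deriv_root (M : ℕ) (P : Polynomial ℂ)
    (h : ∀ θ : ℝ, ∃ r : ℝ, 0 ≤ r ∧
      P.eval (Complex.exp (θ * I)) = Complex.exp ((M : ℝ) * θ * I) * r)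
    (α : ℝ) (hroot : P.eval (Complex.exp (α * I)) = 0) :
    (Polynomial.derivative P).eval (Complex.exp (α * I)) = 0 := by
  set w : ℂ := Complex.exp (α * I) with hw
  set g : ℝ → ℂ := fun θ => Complex.exp (-((M : ℂ) * θ) * I) * P.eval (Complex.exp (θ * I))
    with hg
  -- g is real-valued, nonnegative, and vanishes at α
  have hgr : ∀ θ : ℝ, ∃ r : ℝ, 0 ≤ r ∧ g θ = r := by
    intro θ
    obtain ⟨r, hr0, hre⟩ := h θ
    refine ⟨r, hr0, ?_⟩
    rw [hg]
    simp only
    rw [hre, ← mul_assoc, ← Complex.exp_add]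
    have : -((M : ℂ) * θ) * I + (M : ℝ) * θ * I = 0 := by push_cast; ring
    rw [this, Complex.exp_zero, one_mul]
  have hga : g α = 0 := by rw [hg]; simp only; rw [hroot, mul_zero]
  -- derivative of g at α
  have h1 : HasDerivAt (fun θ : ℝ => ((θ : ℂ))) 1 α := by
    have := (hasDerivAt_id α).ofReal_comp; exact this
  have h2 : HasDerivAt (fun θ : ℝ => (θ : ℂ) * I) I α := by
    simpa using h1.mul_const I
  have h3 : HasDerivAt (fun θ : ℝ => Complex.exp ((θ : ℂ) * I))
      (Complex.exp ((α : ℂ) * I) * I) α := h2.cexp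
  have h4 : HasDerivAt (fun z : ℂ => P.eval z) ((Polynomial.derivative P).eval w) w :=
    P.hasDerivAt w
  have h5 : HasDerivAt (fun θ : ℝ => P.eval (Complex.exp ((θ : ℂ) * I)))
      ((Complex.exp ((α : ℂ) * I) * I) • ((Polynomial.derivative P).eval w)) α :=
    by have := h4.scomp α h3; exact this
  have h6 : HasDerivAt (fun θ : ℝ => -((M : ℂ) * (θ : ℂ)) * I) (-(M : ℂ) * I) α := by
    have := (h1.const_mul ((M : ℂ))).neg.mul_const I
    simpa using this
  have h7 : HasDerivAt (fun θ : ℝ => Complex.exp (-((M : ℂ) * (θ : ℂ)) * I))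
      (Complex.exp (-((M : ℂ) * (α : ℂ)) * I) * (-(M : ℂ) * I)) α := h6.cexp
  set D : ℂ := Complex.exp (-((M : ℂ) * (α : ℂ)) * I) * (-(M : ℂ) * I) * P.eval w +
      Complex.exp (-((M : ℂ) * (α : ℂ)) * I) *
        ((Complex.exp ((α : ℂ) * I) * I) • ((Polynomial.derivative P).eval w)) with hD
  have hgD : HasDerivAt g D α := h7.mul h5
  -- real and imaginary part derivatives
  have hre : HasDerivAt (fun θ => (g θ).re) D.re α := by
    have := Complex.reCLM.hasFDerivAt.comp_hasDerivAt α hgD; exact this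
  have him : HasDerivAt (fun θ => (g θ).im) D.im α := by
    have := Complex.imCLM.hasFDerivAt.comp_hasDerivAt α hgD; exact this
  -- D.re = 0 since re ∘ g has a local min at α
  have hDre : D.re = 0 := by
    have hmin : IsLocalMin (fun θ => (g θ).re) α := by
      apply Filter.Eventually.of_forall
      intro θ
      obtain ⟨r, hr0, hr⟩ := hgr θ
      simp only [hga, hr]
      simpa using hr0
    exact hmin.hasDerivAt_eq_zero hre
  -- D.im = 0 since im ∘ g is identically 0
  have hDim : D.im = 0 := by
    have hzero : (fun θ : ℝ => (g θ).im) = fun _ => (0 : ℝ) := by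
      funext θ
      obtain ⟨r, _, hr⟩ := hgr θ
      simp [hr]
    rw [hzero] at him
    exact (him.unique (hasDerivAt_const α 0)).symm ▸ rfl
  have hD0 : D = 0 := Complex.ext hDre hDim
  rw [hD, hroot, mul_zero, zero_add, smul_eq_mul] at hD0
  have hne : Complex.exp (-((M : ℂ) * (α : ℂ)) * I) * (Complex.exp ((α : ℂ) * I) * I) ≠ 0 := by
    apply mul_ne_zero (Complex.exp_ne_zero _) (mul_ne_zero (Complex.exp_ne_zero _) I_ne_zero)
  rcases mul_eq_zero.mp hD0 with h' | h'
  · exact absurd h' (Complex.exp_ne_zero _)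
  · rcases mul_eq_zero.mp h' with h'' | h''
    · rcases mul_eq_zero.mp h'' with h3' | h3'
      · exact absurd h3' (Complex.exp_ne_zero _)
      · exact absurd h3' I_ne_zero
    · exact h''

lemma FR.key (M : ℕ) : ∀ P : Polynomial ℂ, P.natDegree ≤ 2 * M →
    (∀ θ : ℝ, ∃ r : ℝ, 0 ≤ r ∧
      P.eval (Complex.exp (θ * I)) = Complex.exp ((M : ℝ) * θ * I) * r) →
    ∃ Q : Polynomial ℂ, Q.natDegree ≤ M ∧ ∀ θ : ℝ,
      P.eval (Complex.exp (θ * I)) =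
        Complex.exp ((M : ℝ) * θ * I) * ((‖Q.eval (Complex.exp (θ * I))‖ ^ 2 : ℝ) : ℂ) := by
  induction M with
  | zero =>
    intro P hd h
    obtain ⟨r, hr0, hr⟩ := h 0
    have hPC : P = C (P.coeff 0) := Polynomial.eq_C_of_natDegree_le_zero (by simpa using hd)
    have h0 : P.coeff 0 = (r : ℂ) := by
      rw [hPC] at hr
      simpa using hr
    refine ⟨C ((Real.sqrt r : ℝ) : ℂ), by simp, fun θ => ?_⟩
    rw [hPC, eval_C, eval_C, h0]
    simp only [Nat.cast_zero, Complex.ofReal_zero, zero_mul, Complex.exp_zero, one_mul]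
    rw [Complex.norm_real, Real.norm_eq_abs, _root_.abs_of_nonneg (Real.sqrt_nonneg r), Real.sq_sqrt hr0]
  | succ M ih =>
    intro P hd h
    by_cases hP0 : P = 0
    · exact ⟨0, by simp, fun θ => by simp [hP0]⟩
    have h' : ∀ θ : ℝ, ∃ r : ℝ,
        P.eval (Complex.exp (θ * I)) = Complex.exp (((M + 1 : ℕ) : ℝ) * θ * I) * r :=
      fun θ => (h θ).imp fun r hr => hr.2
    have hsym := FR.coeff_symm (M + 1) P hd h'
    by_cases h0 : P.coeff 0 = 0
    · -- divide by X
      have htop : P.coeff (2 * (M + 1)) = 0 := by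
        have h1 := hsym 0 (by omega)
        rw [h0, Nat.sub_zero] at h1
        exact star_eq_zero.mp h1.symm
      obtain ⟨P₁, hP₁⟩ := Polynomial.X_dvd_iff.mpr h0
      have hcoeff : ∀ k, P₁.coeff k = P.coeff (k + 1) := fun k => by
        rw [hP₁, Polynomial.coeff_X_mul]
      have hd₁ : P₁.natDegree ≤ 2 * M := by
        rw [Polynomial.natDegree_le_iff_coeff_eq_zero]
        intro k hk
        rw [hcoeff]
        rcases Nat.lt_or_ge (2 * (M + 1)) (k + 1) with hlt | hge
        · exact Polynomial.coeff_eq_zero_of_natDegree_lt (lt_of_le_of_lt hd hlt)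
        · have hk1 : k + 1 = 2 * (M + 1) := by omega
          rw [hk1]; exact htop
      have h₁ : ∀ θ : ℝ, ∃ r : ℝ, 0 ≤ r ∧
          P₁.eval (Complex.exp (θ * I)) = Complex.exp ((M : ℝ) * θ * I) * r := by
        intro θ
        obtain ⟨r, hr0, hr⟩ := h θ
        refine ⟨r, hr0, ?_⟩
        rw [hP₁, eval_mul, eval_X] at hr
        apply mul_left_cancel₀ (Complex.exp_ne_zero ((θ : ℂ) * I))
        rw [hr, ← mul_assoc, ← Complex.exp_add]
        congr 2
        push_cast
        ring
      obtain ⟨Q, hQd, hQ⟩ := ih P₁ hd₁ h₁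
      refine ⟨Q, hQd.trans (Nat.le_succ M), fun θ => ?_⟩
      rw [hP₁, eval_mul, eval_X, hQ θ, ← mul_assoc, ← Complex.exp_add]
      congr 2
      push_cast
      ring
    · -- root case
      have htop : P.coeff (2 * (M + 1)) ≠ 0 := by
        intro hc
        apply h0
        rw [hsym 0 (by omega), Nat.sub_zero, hc, map_zero]
      have hdeg : 0 < P.degree := by
        have h1 : 2 * (M + 1) ≤ P.natDegree := Polynomial.le_natDegree_of_ne_zero htop
        exact Polynomial.natDegree_pos_iff_degree_pos.mp (by omega)
      obtain ⟨w, hwr⟩ := Complex.exists_root hdeg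
      rw [Polynomial.IsRoot] at hwr
      have hw0 : w ≠ 0 := by
        intro hc
        apply h0
        subst hc
        rw [Polynomial.coeff_zero_eq_eval_zero]
        exact hwr
      have hwc0 : (starRingEnd ℂ) w ≠ 0 := by simpa using hw0
      set v : ℂ := ((starRingEnd ℂ) w)⁻¹ with hv
      have hdvd : (X - C w) * (X - C v) ∣ P := by
        by_cases hc : v = w
        · -- double root on the circle
          have habs : ‖w‖ = 1 := by
            have h1 : (starRingEnd ℂ) w * v = 1 := by
              rw [hv]; exact mul_inv_cancel₀ hwc0
            rw [hc] at h1
            have h2 : Complex.normSq w = 1 := by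
              have h3 := Complex.mul_conj w
              rw [mul_comm, h1] at h3
              exact_mod_cast h3.symm
            have h4 : ‖w‖ ^ 2 = 1 := by
              rw [← Complex.normSq_eq_norm_sq, h2]
            nlinarith [norm_nonneg w]
          obtain ⟨α, hα⟩ := (Complex.norm_eq_one_iff w).mp habs
          have hder := FR.deriv_root (M + 1) P h α (by rw [hα]; exact hwr)
          rw [hα] at hder
          obtain ⟨P₃, hP₃⟩ := Polynomial.dvd_iff_isRoot.mpr hwr
          have hP₃w : P₃.eval w = 0 := by
            have hdP : Polynomial.derivative P = P₃ + (X - C w) * Polynomial.derivative P₃ := by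
              rw [hP₃, Polynomial.derivative_mul]
              simp
            have := congrArg (Polynomial.eval w) hdP
            rw [hder] at this
            simpa using this.symm
          obtain ⟨P₁, hP₁⟩ := Polynomial.dvd_iff_isRoot.mpr hP₃w
          exact ⟨P₁, by rw [hP₃, hP₁, hc]; ring⟩
        · have hvr := FR.reflect_root (M + 1) P hd h' w hw0 hwr
          have hco : IsCoprime (X - C w) (X - C v) :=
            Polynomial.isCoprime_X_sub_C_of_isUnit_sub
              (IsUnit.mk0 _ (sub_ne_zero.mpr (fun he => hc he.symm)))
          exact IsCoprime.mul_dvd hco (Polynomial.dvd_iff_isRoot.mpr hwr)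
            (Polynomial.dvd_iff_isRoot.mpr hvr)
      obtain ⟨P₁, hP₁⟩ := hdvd
      have hP₁0 : P₁ ≠ 0 := fun hc => hP0 (by rw [hP₁, hc, mul_zero])
      have hd₁ : P₁.natDegree ≤ 2 * M := by
        have hmul := Polynomial.natDegree_mul
          (mul_ne_zero (Polynomial.X_sub_C_ne_zero w) (Polynomial.X_sub_C_ne_zero v)) hP₁0
        rw [← hP₁] at hmul
        have h2 : ((X - C w) * (X - C v)).natDegree = 2 := by
          rw [Polynomial.natDegree_mul (Polynomial.X_sub_C_ne_zero w)
            (Polynomial.X_sub_C_ne_zero v), Polynomial.natDegree_X_sub_C,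
            Polynomial.natDegree_X_sub_C]
        rw [h2] at hmul
        omega
      set P₂ : Polynomial ℂ := C (-((starRingEnd ℂ) w)⁻¹) * P₁ with hP₂
      have hd₂ : P₂.natDegree ≤ 2 * M := (Polynomial.natDegree_C_mul_le _ _).trans hd₁
      have hcirc : ∀ θ : ℝ, Complex.exp ((θ : ℂ) * I) * (starRingEnd ℂ) (Complex.exp ((θ : ℂ) * I)) = 1 := by
        intro θ
        rw [← Complex.exp_conj]
        rw [← Complex.exp_add]
        have : (θ : ℂ) * I + (starRingEnd ℂ) ((θ : ℂ) * I) = 0 := by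
          simp [Complex.ext_iff]
        rw [this, Complex.exp_zero]
      have hpt : ∀ θ : ℝ, P.eval (Complex.exp ((θ : ℂ) * I)) =
          Complex.exp ((θ : ℂ) * I) * ((Complex.normSq (Complex.exp ((θ : ℂ) * I) - w) : ℝ) : ℂ) *
            P₂.eval (Complex.exp ((θ : ℂ) * I)) := by
        intro θ
        set z := Complex.exp ((θ : ℂ) * I) with hz
        have hzz := hcirc θ
        rw [hP₁, eval_mul, eval_mul, eval_sub, eval_sub, eval_X, eval_C, eval_C, hP₂,
          eval_mul, eval_C]
        have hns : ((Complex.normSq (z - w) : ℝ) : ℂ) =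
            (z - w) * ((starRingEnd ℂ) z - (starRingEnd ℂ) w) := by
          rw [← map_sub, Complex.mul_conj]
        rw [hns, hv]
        field_simp
        linear_combination (Polynomial.eval z P₁ * (z - w)) * hzz
      -- positivity hypothesis for P₂
      have h₂ : ∀ θ : ℝ, ∃ r : ℝ, 0 ≤ r ∧
          P₂.eval (Complex.exp (θ * I)) = Complex.exp ((M : ℝ) * θ * I) * r := by
        set g : ℝ → ℂ := fun θ =>
          Complex.exp (-((M : ℂ) * θ) * I) * P₂.eval (Complex.exp ((θ : ℂ) * I)) with hgdef
        have hgc : Continuous g := by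
          apply Continuous.mul
          · exact Complex.continuous_exp.comp
              (((continuous_const.mul Complex.continuous_ofReal).neg).mul continuous_const)
          · exact (Polynomial.continuous P₂).comp
              (Complex.continuous_exp.comp (Complex.continuous_ofReal.mul continuous_const))
        have hgood : ∀ θ : ℝ, Complex.exp ((θ : ℂ) * I) ≠ w →
            (g θ).im = 0 ∧ 0 ≤ (g θ).re := by
          intro θ hne
          obtain ⟨r, hr0, hr⟩ := h θ
          have hns : 0 < Complex.normSq (Complex.exp ((θ : ℂ) * I) - w) := by
            rw [Complex.normSq_pos]
            exact sub_ne_zero.mpr hne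
          have hkey : g θ = ((r / Complex.normSq (Complex.exp ((θ : ℂ) * I) - w) : ℝ) : ℂ) := by
            have hpt' := hpt θ
            rw [hr] at hpt'
            rw [hgdef]
            simp only
            rw [Complex.ofReal_div]
            rw [eq_div_iff (Complex.ofReal_ne_zero.mpr hns.ne')]
            have hz0 : Complex.exp ((θ : ℂ) * I) ≠ 0 := Complex.exp_ne_zero _
            apply mul_left_cancel₀ hz0
            apply mul_left_cancel₀ (Complex.exp_ne_zero ((M : ℂ) * θ * I))
            calc Complex.exp ((M : ℂ) * θ * I) * (Complex.exp ((θ : ℂ) * I) *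
                (Complex.exp (-((M : ℂ) * θ) * I) * P₂.eval (Complex.exp ((θ : ℂ) * I)) *
                  ((Complex.normSq (Complex.exp ((θ : ℂ) * I) - w) : ℝ) : ℂ)))
                = Complex.exp ((θ : ℂ) * I) *
                    ((Complex.normSq (Complex.exp ((θ : ℂ) * I) - w) : ℝ) : ℂ) *
                    P₂.eval (Complex.exp ((θ : ℂ) * I)) *
                    (Complex.exp ((M : ℂ) * θ * I) * Complex.exp (-((M : ℂ) * θ) * I)) := by
                  ring
              _ = Complex.exp ((θ : ℂ) * I) *
                    ((Complex.normSq (Complex.exp ((θ : ℂ) * I) - w) : ℝ) : ℂ) *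
                    P₂.eval (Complex.exp ((θ : ℂ) * I)) := by
                  rw [← Complex.exp_add]
                  have : (M : ℂ) * θ * I + -((M : ℂ) * θ) * I = 0 := by ring
                  rw [this, Complex.exp_zero, mul_one]
              _ = Complex.exp (((M + 1 : ℕ) : ℝ) * θ * I) * r := hpt'.symm
              _ = Complex.exp ((M : ℂ) * θ * I) * (Complex.exp ((θ : ℂ) * I) * r) := by
                  rw [← mul_assoc, ← Complex.exp_add]
                  congr 2
                  push_cast
                  ring
          refine ⟨?_, ?_⟩
          · rw [hkey, Complex.ofReal_im]
          · rw [hkey, Complex.ofReal_re]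
            exact div_nonneg hr0 hns.le
        have hCset : IsClosed {u : ℂ | u.im = 0 ∧ 0 ≤ u.re} := by
          apply IsClosed.inter
          · exact isClosed_eq Complex.continuous_im continuous_const
          · exact isClosed_le continuous_const Complex.continuous_re
        have hmem : ∀ θ : ℝ, (g θ).im = 0 ∧ 0 ≤ (g θ).re := by
          intro θ
          by_cases hne : Complex.exp ((θ : ℂ) * I) = w
          · have hseq : Filter.Tendsto (fun n : ℕ => g (θ + 1 / (n + 1)))
                Filter.atTop (nhds (g θ)) := by
              apply (hgc.continuousAt.tendsto).comp
              have := tendsto_one_div_add_atTop_nhds_zero_nat (𝕜 := ℝ)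
              have h5 : Filter.Tendsto (fun n : ℕ => θ + 1 / (n + 1))
                  Filter.atTop (nhds (θ + 0)) := Filter.Tendsto.const_add θ (by exact_mod_cast this)
              simpa using h5
            have hmem' : ∀ n : ℕ, g (θ + 1 / (n + 1)) ∈ {u : ℂ | u.im = 0 ∧ 0 ≤ u.re} := by
              intro n
              apply hgood
              intro hcon
              rw [Complex.ofReal_add, add_mul, Complex.exp_add, hne] at hcon
              have h6 := mul_left_cancel₀ hw0 (hcon.trans (mul_one w).symm)
              rw [Complex.exp_eq_one_iff] at h6
              obtain ⟨k, hk⟩ := h6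
              have hI : (I : ℂ) ≠ 0 := Complex.I_ne_zero
              have h7 : ((1 / (n + 1) : ℝ) : ℂ) = k * (2 * Real.pi) := by
                apply mul_right_cancel₀ hI
                rw [hk]
                push_cast
                ring
              have h8 : (1 / (n + 1) : ℝ) = k * (2 * Real.pi) := by exact_mod_cast h7
              have hpos : (0 : ℝ) < 1 / (n + 1) := by positivity
              have hle : (1 / (n + 1) : ℝ) ≤ 1 := by
                rw [div_le_one (by positivity)]
                exact le_add_of_nonneg_left (Nat.cast_nonneg n)
              rcases lt_trichotomy k 0 with hk0 | hk0 | hk0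
              · have : (k : ℝ) ≤ -1 := by exact_mod_cast Int.le_sub_one_of_lt hk0
                nlinarith [Real.pi_gt_three]
              · rw [hk0] at h8
                simp at h8
                linarith
              · have : (1 : ℝ) ≤ (k : ℝ) := by exact_mod_cast hk0
                nlinarith [Real.pi_gt_three]
            exact hCset.mem_of_tendsto hseq (Filter.Eventually.of_forall hmem')
          · exact hgood θ hne
        intro θ
        obtain ⟨him, hre⟩ := hmem θ
        refine ⟨(g θ).re, hre, ?_⟩
        have hgr : g θ = ((g θ).re : ℂ) := Complex.ext (by simp) (by simp [him])
        have : P₂.eval (Complex.exp ((θ : ℂ) * I)) = Complex.exp ((M : ℂ) * θ * I) * g θ := by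
          rw [hgdef]
          simp only
          rw [← mul_assoc, ← Complex.exp_add]
          have h9 : (M : ℂ) * θ * I + -((M : ℂ) * θ) * I = 0 := by ring
          rw [h9, Complex.exp_zero, one_mul]
        rw [this, hgr]
        norm_cast
      obtain ⟨Q, hQd, hQ⟩ := ih P₂ hd₂ h₂
      refine ⟨(X - C w) * Q, ?_, fun θ => ?_⟩
      · apply (Polynomial.natDegree_mul_le).trans
        rw [Polynomial.natDegree_X_sub_C]
        omega
      · rw [eval_mul, eval_sub, eval_X, eval_C, hpt θ, hQ θ]
        rw [norm_mul, mul_pow, Complex.sq_norm (Complex.exp ((θ : ℂ) * I) - w)]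
        rw [Complex.ofReal_mul]
        calc Complex.exp ((θ : ℂ) * I) *
              ((Complex.normSq (Complex.exp ((θ : ℂ) * I) - w) : ℝ) : ℂ) *
              (Complex.exp ((M : ℝ) * θ * I) *
                ((‖Q.eval (Complex.exp ((θ : ℂ) * I))‖ ^ 2 : ℝ) : ℂ))
            = Complex.exp ((θ : ℂ) * I) * Complex.exp ((M : ℝ) * θ * I) *
              (((Complex.normSq (Complex.exp ((θ : ℂ) * I) - w) : ℝ) : ℂ) *
                ((‖Q.eval (Complex.exp ((θ : ℂ) * I))‖ ^ 2 : ℝ) : ℂ)) := by ring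
          _ = Complex.exp (((M + 1 : ℕ) : ℝ) * θ * I) *
              (((Complex.normSq (Complex.exp ((θ : ℂ) * I) - w) : ℝ) : ℂ) *
                ((‖Q.eval (Complex.exp ((θ : ℂ) * I))‖ ^ 2 : ℝ) : ℂ)) := by
              rw [← Complex.exp_add]
              congr 2
              push_cast
              ring

end FRAux

section FRMain
open Polynomial

/-- Fejér–Riesz factorization of a nonnegative cosine polynomial. -/
theorem fejer_riesz_cosine (M : ℕ) (lam : Fin (M + 1) → ℝ)
    (hpos : ∀ θ : ℝ, 0 ≤ ∑ m : Fin (M + 1), lam m * Real.cos (m * θ)) :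
    ∃ p : Fin (M + 1) → ℂ, ∀ θ : ℝ,
      ∑ m : Fin (M + 1), lam m * Real.cos (m * θ) =
        ‖∑ m : Fin (M + 1), p m * Complex.exp (I * (m : ℕ) * θ)‖ ^ 2 := by
  set P : Polynomial ℂ := ∑ m : Fin (M + 1),
    C ((lam m / 2 : ℝ) : ℂ) * (X ^ (M + (m : ℕ)) + X ^ (M - (m : ℕ))) with hP
  have hdP : P.natDegree ≤ 2 * M := by
    apply Polynomial.natDegree_sum_le_of_forall_le
    intro m _
    apply (Polynomial.natDegree_C_mul_le _ _).trans
    apply (Polynomial.natDegree_add_le _ _).trans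
    simp only [Polynomial.natDegree_X_pow]
    have := m.isLt
    omega
  have heval : ∀ θ : ℝ, P.eval (Complex.exp (θ * I)) =
      Complex.exp ((M : ℝ) * θ * I) *
        ((∑ m : Fin (M + 1), lam m * Real.cos (m * θ) : ℝ) : ℂ) := by
    intro θ
    rw [hP, Polynomial.eval_finset_sum, Complex.ofReal_sum, Finset.mul_sum]
    apply Finset.sum_congr rfl
    intro m _
    have hm : (m : ℕ) ≤ M := Nat.lt_succ_iff.mp m.isLt
    rw [eval_mul, eval_C, eval_add, eval_pow, eval_pow, eval_X]
    have hz1 : (Complex.exp ((θ : ℂ) * I)) ^ (M + (m : ℕ)) =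
        Complex.exp ((M : ℂ) * θ * I) * Complex.exp (((m : ℕ) : ℂ) * θ * I) := by
      rw [← Complex.exp_nat_mul, ← Complex.exp_add]
      congr 1
      push_cast
      ring
    have hz2 : (Complex.exp ((θ : ℂ) * I)) ^ (M - (m : ℕ)) =
        Complex.exp ((M : ℂ) * θ * I) * Complex.exp (-(((m : ℕ) : ℂ) * θ) * I) := by
      rw [← Complex.exp_nat_mul, ← Complex.exp_add]
      congr 1
      push_cast [Nat.cast_sub hm]
      ring
    have h2c := Complex.two_cos (((m : ℕ) : ℂ) * (θ : ℂ))
    have hcos : ((lam m * Real.cos ((m : ℕ) * θ) : ℝ) : ℂ) =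
        (lam m : ℂ) * ((Complex.exp (((m : ℕ) : ℂ) * θ * I) +
          Complex.exp (-(((m : ℕ) : ℂ) * θ) * I)) / 2) := by
      push_cast
      linear_combination ((lam m : ℂ) / 2) * h2c
    rw [hz1, hz2, hcos]
    push_cast
    ring
  -- apply the key lemma
  obtain ⟨Q, hQd, hQ⟩ := FR.key M P hdP (fun θ => ⟨∑ m : Fin (M + 1), lam m * Real.cos (m * θ),
    hpos θ, heval θ⟩)
  refine ⟨fun m => Q.coeff m, fun θ => ?_⟩
  have hsum : ∑ m : Fin (M + 1), Q.coeff m * Complex.exp (I * ((m : ℕ) : ℂ) * θ) =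
      Q.eval (Complex.exp ((θ : ℂ) * I)) := by
    rw [Polynomial.eval_eq_sum_range' (Nat.lt_succ_of_le hQd)]
    rw [← Fin.sum_univ_eq_sum_range (fun i => Q.coeff i * (Complex.exp ((θ : ℂ) * I)) ^ i)]
    apply Finset.sum_congr rfl
    intro m _
    congr 1
    rw [← Complex.exp_nat_mul]
    congr 1
    ring
  rw [hsum]
  -- combine heval and hQ
  have h1 := (heval θ).symm.trans (hQ θ)
  have h2 := mul_left_cancel₀ (Complex.exp_ne_zero (((M : ℝ) : ℂ) * θ * I)) h1
  exact_mod_cast h2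

end FRMain
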